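/- (Localization centers lie at centers of singular cubes.) Fix N ≥ 1, d ≥ 1, m > 0, α = 3/2, and a potential W : ℤ^{Nd} → ℝ; let H be the lattice Schrödinger operator (HΨ)(x) = Σ_{y : ‖y−x‖₁=1} Ψ(y) + W(x)Ψ(x) on ℤ^{Nd}. There exists L* = L*(N,d,m) such that the following holds for all L ≥ L*: if Ψ ∈ ℓ²(ℤ^{Nd}) is nonzero, satisfies HΨ = EΨ pointwise for some E ∈ ℝ, and some maximizer x* of x ↦ |Ψ(x)| (which exists since Ψ ∈ ℓ², Ψ ≠ 0) satisfies ‖x* − x‖ ≤ L^{1/α} for a point x ∈ ℤ^{Nd}, then the cube C_L(x) is (E,m)-singular. -/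

import Mathlib

/-!
Let `Λ = C_L(x)` and `M = ‖Ψ x*‖ = max |Ψ| > 0`. Restricted to `Λ`, the eigenvalue equation reads
`(H_Λ - E) Ψ|_Λ = -b`, where `b(z)` collects the hopping terms from `z` to neighbours outside `Λ`;
so `b` is supported on `∂⁻Λ` and `|b| ≤ 3^{Nd} M`. If `C_L(x)` were `(E,m)`-non-singular, the Green
function representation `Ψ(x*) = -∑_z G_Λ(x*, z; E) b(z)` would give
`M ≤ (2L+1)^{Nd} 3^{Nd} e^{-mL} M`, which is impossible once `L` is large.
-/

open scoped BigOperators ENNReal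
open MeasureTheory

namespace MPLoc

/-- Configurations of `N` particles in `ℤ^d`. -/
abbrev Conf (N d : ℕ) := Fin N × Fin d → ℤ

/-- Max-norm on `ℤ^ι`. -/
def supNorm {ι : Type*} [Fintype ι] (x : ι → ℤ) : ℕ :=
  Finset.univ.sup fun i => (x i).natAbs

/-- ℓ¹-norm on `ℤ^ι`. -/
def l1Norm {ι : Type*} [Fintype ι] (x : ι → ℤ) : ℕ :=
  ∑ i, (x i).natAbs

/-- The cube `C_L(u) = {x : ‖x - u‖_∞ ≤ L}`. -/
noncomputable def cube {ι : Type*} [Fintype ι] [DecidableEq ι] (u : ι → ℤ) (L : ℕ) :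
    Finset (ι → ℤ) :=
  Finset.Icc (fun i => u i - L) (fun i => u i + L)

/-- The finite-volume Hamiltonian with Dirichlet boundary conditions on `Λ`,
as a matrix: nearest-neighbour hopping plus multiplication by `W`. -/
noncomputable def hamMatrix {ι : Type*} [Fintype ι] [DecidableEq ι]
    (W : (ι → ℤ) → ℝ) (Λ : Finset (ι → ℤ)) : Matrix Λ Λ ℂ :=
  fun x y => (if l1Norm (x.1 - y.1) = 1 then 1 else 0) +
    (if x = y then (W x.1 : ℂ) else 0)

/-- `z` is an eigenvalue of the matrix `A`. -/
def IsEV {n : Type*} [Fintype n] [DecidableEq n] (A : Matrix n n ℂ) (z : ℂ) : Prop :=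
  ∃ v : n → ℂ, v ≠ 0 ∧ A.mulVec v = z • v

/-- Green function `G_Λ(x, y; ζ)` of the finite-volume Hamiltonian. -/
noncomputable def green {ι : Type*} [Fintype ι] [DecidableEq ι]
    (W : (ι → ℤ) → ℝ) (Λ : Finset (ι → ℤ)) (ζ : ℂ) (x y : ι → ℤ) : ℂ :=
  if hx : x ∈ Λ then
    if hy : y ∈ Λ then ((hamMatrix W Λ - ζ • (1 : Matrix Λ Λ ℂ))⁻¹) ⟨x, hx⟩ ⟨y, hy⟩
    else 0
  else 0

/-- `γ(m, L, n) = m L (1 + L^{-1/4})^{N - n + 1}`. -/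
noncomputable def gammaExp (m : ℝ) (L : ℕ) (N n : ℕ) : ℝ :=
  m * L * (1 + (L : ℝ) ^ (-(1 : ℝ) / 4)) ^ (N - n + 1)

/-- The cube `C_L(u) ⊂ ℤ^{Nd}` is `(E,m)`-non-singular. -/
noncomputable def NonSingular {ι : Type*} [Fintype ι] [DecidableEq ι] (N : ℕ)
    (W : (ι → ℤ) → ℝ) (E m : ℝ) (u : ι → ℤ) (L : ℕ) : Prop :=
  ¬ IsEV (hamMatrix W (cube u L)) (E : ℂ) ∧
  ∀ x : ι → ℤ, ((supNorm (x - u) : ℝ) ≤ (L : ℝ) ^ ((2 : ℝ) / 3)) →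
    ∀ y : ι → ℤ, supNorm (y - u) = L →
      ‖green W (cube u L) (E : ℂ) x y‖ ≤ Real.exp (-(gammaExp m L N N))

/-- Symmetrized distance `d_S(x,y) = min_τ ‖τ(x) - y‖` on `(ℤ^d)^N`. -/
noncomputable def symmDist (N d : ℕ) (x y : Conf N d) : ℤ :=
  Finset.univ.inf' ⟨1, Finset.mem_univ 1⟩ fun τ : Equiv.Perm (Fin N) =>
    supNorm (fun p : Fin N × Fin d => x (τ p.1, p.2) - y p)

/-- Potential energy of the `N`-particle Hamiltonian:
`W(x) = g ∑_j V(x_j; ω) + U(x)`. -/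
def potW {N d : ℕ} {Ω : Type*} (g : ℝ) (V : (Fin d → ℤ) → Ω → ℝ)
    (U : Conf N d → ℝ) (ω : Ω) (x : Conf N d) : ℝ :=
  g * ∑ j : Fin N, V (fun i => x (j, i)) ω + U x

/-- Action of the full lattice Hamiltonian `H = Δ + W` on a function. -/
noncomputable def hamApply {ι : Type*} [Fintype ι] [DecidableEq ι]
    (W : (ι → ℤ) → ℝ) (Ψ : (ι → ℤ) → ℂ) (x : ι → ℤ) : ℂ :=
  (∑ y ∈ cube x 1, if l1Norm (y - x) = 1 then Ψ y else 0) + (W x : ℂ) * Ψ x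

/-- The scales `L_0, L_{k+1} = ⌊L_k^{3/2}⌋`. -/
noncomputable def scale (L0 : ℕ) : ℕ → ℕ
  | 0 => L0
  | k + 1 => Nat.floor ((scale L0 k : ℝ) ^ ((3 : ℝ) / 2))

/-- Sample mean `ξ_Q` of the random field `V` over `Q`. -/
noncomputable def sampleMean {d : ℕ} {Ω : Type*} (V : (Fin d → ℤ) → Ω → ℝ)
    (Q : Finset (Fin d → ℤ)) (ω : Ω) : ℝ :=
  (∑ x ∈ Q, V x ω) / Q.card

/-- The σ-algebra `F_{V,Q}` generated by the fluctuations `η_x = V(x) - ξ_Q`, `x ∈ Q`,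
together with `V(y)`, `y ∉ Q`. -/
noncomputable def fieldSigma {d : ℕ} {Ω : Type*} [MeasurableSpace Ω]
    (V : (Fin d → ℤ) → Ω → ℝ) (Q : Finset (Fin d → ℤ)) : MeasurableSpace Ω :=
  (⨆ x ∈ Q, MeasurableSpace.comap (fun ω => V x ω - sampleMean V Q ω) inferInstance) ⊔
  (⨆ (y : Fin d → ℤ) (_ : y ∉ Q), MeasurableSpace.comap (V y) inferInstance)

/-- Condition (CMν): the conditional distribution function of the sample mean `ξ_Q`
given `F_{V,Q}` has continuity modulus `ν_R` for every rectangle `Q` of diameter `≤ R`. -/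
def CondMeasCM {d : ℕ} {Ω : Type*} [MeasurableSpace Ω] (μ : Measure Ω)
    (V : (Fin d → ℤ) → Ω → ℝ) (ν : ℕ → ℝ → ℝ) : Prop :=
  (∀ R : ℕ, ∀ t : ℝ, 0 ≤ ν R t) ∧
  (∀ R : ℕ, Filter.Tendsto (ν R) (nhdsWithin 0 (Set.Ioi 0)) (nhds 0)) ∧
  ∀ (R : ℕ) (Q : Finset (Fin d → ℤ)), Q.Nonempty →
    (∃ a b : Fin d → ℤ, Q = Finset.Icc a b) →
    (∀ x ∈ Q, ∀ y ∈ Q, supNorm (x - y) ≤ R) →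
    ∀ t s : ℝ, ∀ᵐ ω ∂μ,
      |MeasureTheory.condExp (fieldSigma V Q) μ
          (Set.indicator {ω' | sampleMean V Q ω' ≤ t} (fun _ => (1 : ℝ))) ω -
       MeasureTheory.condExp (fieldSigma V Q) μ
          (Set.indicator {ω' | sampleMean V Q ω' ≤ s} (fun _ => (1 : ℝ))) ω|
        ≤ ν R |t - s|

open Filter Topology Matrix

section Cube

variable {ι : Type*} [Fintype ι]

lemma supNorm_le_iff {z : ι → ℤ} {L : ℕ} : supNorm z ≤ L ↔ ∀ i, (z i).natAbs ≤ L := by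
  simp [supNorm, Finset.sup_le_iff]

lemma l1Norm_sub_comm (a b : ι → ℤ) : l1Norm (a - b) = l1Norm (b - a) := by
  unfold l1Norm
  refine Finset.sum_congr rfl fun i _ => ?_
  simp only [Pi.sub_apply]
  omega

variable [DecidableEq ι]

lemma mem_cube_iff {u z : ι → ℤ} {L : ℕ} : z ∈ cube u L ↔ supNorm (z - u) ≤ L := by
  simp only [cube, Finset.mem_Icc, Pi.le_def, supNorm_le_iff, Pi.sub_apply]
  constructor
  · rintro ⟨hlo, hhi⟩ i
    have := hlo i
    have := hhi i
    omega
  · intro h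
    exact ⟨fun i => by have := h i; omega, fun i => by have := h i; omega⟩

lemma card_cube (u : ι → ℤ) (L : ℕ) : (cube u L).card = (2 * L + 1) ^ Fintype.card ι := by
  rw [cube, Pi.card_Icc, Finset.prod_congr rfl fun i _ => ?_, Finset.prod_const, Finset.card_univ]
  rw [Int.card_Icc]
  omega

lemma mem_cube_one_of_l1Norm_eq_one {y z : ι → ℤ} (h : l1Norm (y - z) = 1) : y ∈ cube z 1 := by
  rw [mem_cube_iff, supNorm_le_iff, ← h]
  exact fun i => Finset.single_le_sum (f := fun i => ((y - z) i).natAbs)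
    (fun _ _ => Nat.zero_le _) (Finset.mem_univ i)

lemma supNorm_sub_eq_of_mem_cube_one_not_mem {u z y : ι → ℤ} {L : ℕ} (hz : z ∈ cube u L)
    (hy : y ∈ cube z 1) (hyu : y ∉ cube u L) : supNorm (z - u) = L := by
  rw [mem_cube_iff, supNorm_le_iff] at hz hy hyu
  push Not at hyu
  obtain ⟨i, hi⟩ := hyu
  have hzi : (z i - u i).natAbs = L := by
    have := hz i
    have := hy i
    simp only [Pi.sub_apply] at *
    omega
  refine le_antisymm (supNorm_le_iff.2 hz) ?_
  rw [← hzi]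
  exact Finset.le_sup (f := fun i => ((z - u) i).natAbs) (Finset.mem_univ i)

end Cube

section Boundary

variable {ι : Type*} [Fintype ι] [DecidableEq ι]

noncomputable def boundaryTerm (Ψ : (ι → ℤ) → ℂ) (Λ : Finset (ι → ℤ)) (z : ι → ℤ) : ℂ :=
  ∑ y ∈ cube z 1 \ Λ, if l1Norm (y - z) = 1 then Ψ y else 0

lemma hamMatrix_mulVec_restrict (W : (ι → ℤ) → ℝ) (Ψ : (ι → ℤ) → ℂ) (Λ : Finset (ι → ℤ))
    (z : Λ) :
    (hamMatrix W Λ *ᵥ fun y : Λ => Ψ y) z = hamApply W Ψ z - boundaryTerm Ψ Λ z := by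
  set F : (ι → ℤ) → ℂ := fun y => if l1Norm (y - z.1) = 1 then Ψ y else 0
  have hhop : (∑ y : Λ, if l1Norm (z.1 - y.1) = 1 then Ψ y else 0) = ∑ y ∈ Λ, F y := by
    rw [← Finset.sum_coe_sort Λ F]
    exact Finset.sum_congr rfl fun y _ => by rw [l1Norm_sub_comm]
  have hinside : ∑ y ∈ cube z.1 1 ∩ Λ, F y = ∑ y ∈ Λ, F y := by
    rw [Finset.inter_comm]
    exact Finset.sum_subset Finset.inter_subset_left fun y hy hny =>
      if_neg fun h => hny (Finset.mem_inter.2 ⟨hy, mem_cube_one_of_l1Norm_eq_one h⟩)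
  have hsplit := Finset.sum_inter_add_sum_sdiff (cube z.1 1) Λ F
  simp only [Matrix.mulVec, dotProduct, hamMatrix, add_mul, ite_mul, one_mul, zero_mul,
    Finset.sum_add_distrib, Finset.sum_ite_eq, Finset.mem_univ, if_true]
  rw [hhop, ← hinside, hamApply, boundaryTerm]
  linear_combination hsplit

lemma isUnit_det_sub_smul_one_of_not_isEV {n : Type*} [Fintype n] [DecidableEq n]
    {A : Matrix n n ℂ} {ζ : ℂ} (h : ¬ IsEV A ζ) : IsUnit (A - ζ • 1).det := by
  refine isUnit_iff_ne_zero.2 fun hdet => h ?_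
  obtain ⟨v, hv, hAv⟩ := Matrix.exists_mulVec_eq_zero_iff.2 hdet
  refine ⟨v, hv, ?_⟩
  rwa [Matrix.sub_mulVec, Matrix.smul_mulVec, Matrix.one_mulVec, sub_eq_zero] at hAv

lemma green_of_mem (W : (ι → ℤ) → ℝ) (Λ : Finset (ι → ℤ)) (ζ : ℂ) {x : ι → ℤ} (hx : x ∈ Λ)
    (z : Λ) : green W Λ ζ x z = (hamMatrix W Λ - ζ • 1)⁻¹ ⟨x, hx⟩ z := by
  rw [green, dif_pos hx, dif_pos z.2]

lemma eq_neg_sum_green_mul_boundaryTerm {W : (ι → ℤ) → ℝ} {Ψ : (ι → ℤ) → ℂ}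
    {Λ : Finset (ι → ℤ)} {ζ : ℂ} (hζ : ¬ IsEV (hamMatrix W Λ) ζ)
    (heig : ∀ z ∈ Λ, hamApply W Ψ z = ζ * Ψ z) {x : ι → ℤ} (hx : x ∈ Λ) :
    Ψ x = -∑ z : Λ, green W Λ ζ x z * boundaryTerm Ψ Λ z := by
  set A := hamMatrix W Λ - ζ • 1
  have hA : A *ᵥ (fun y : Λ => Ψ y) = fun z : Λ => -boundaryTerm Ψ Λ z := by
    funext z
    rw [Matrix.sub_mulVec, Matrix.smul_mulVec, Matrix.one_mulVec, Pi.sub_apply,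
      hamMatrix_mulVec_restrict, heig z z.2]
    simp only [Pi.smul_apply, smul_eq_mul]
    ring
  have hΨ : (fun y : Λ => Ψ y) = A⁻¹ *ᵥ fun z : Λ => -boundaryTerm Ψ Λ z := by
    rw [← hA, Matrix.mulVec_mulVec,
      Matrix.nonsing_inv_mul A (isUnit_det_sub_smul_one_of_not_isEV hζ), Matrix.one_mulVec]
  simpa [Matrix.mulVec, dotProduct, green_of_mem W Λ ζ hx] using congrFun hΨ ⟨x, hx⟩

lemma norm_boundaryTerm_le {Ψ : (ι → ℤ) → ℂ} {M : ℝ} (hM : ∀ y, ‖Ψ y‖ ≤ M)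
    (Λ : Finset (ι → ℤ)) (z : ι → ℤ) : ‖boundaryTerm Ψ Λ z‖ ≤ 3 ^ Fintype.card ι * M := by
  have hM0 : 0 ≤ M := (norm_nonneg _).trans (hM 0)
  have hterm : ∀ y ∈ cube z 1 \ Λ, ‖if l1Norm (y - z) = 1 then Ψ y else 0‖ ≤ M := by
    intro y _
    split_ifs
    exacts [hM y, by simpa using hM0]
  have hcard : ((cube z 1 \ Λ).card : ℝ) ≤ 3 ^ Fintype.card ι := by
    have := (Finset.card_le_card (s := cube z 1 \ Λ) Finset.sdiff_subset).trans_eq (card_cube z 1)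
    exact_mod_cast this
  calc ‖boundaryTerm Ψ Λ z‖ ≤ ∑ _y ∈ cube z 1 \ Λ, M :=
        (norm_sum_le _ _).trans (Finset.sum_le_sum hterm)
    _ = (cube z 1 \ Λ).card * M := by rw [Finset.sum_const, nsmul_eq_mul]
    _ ≤ 3 ^ Fintype.card ι * M := mul_le_mul_of_nonneg_right hcard hM0

lemma boundaryTerm_cube_eq_zero {Ψ : (ι → ℤ) → ℂ} {u z : ι → ℤ} {L : ℕ} (hz : z ∈ cube u L)
    (hzu : supNorm (z - u) ≠ L) : boundaryTerm Ψ (cube u L) z = 0 := by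
  refine Finset.sum_eq_zero fun y hy => ?_
  obtain ⟨hyz, hyu⟩ := Finset.mem_sdiff.1 hy
  exact absurd (supNorm_sub_eq_of_mem_cube_one_not_mem hz hyz hyu) hzu

end Boundary

lemma natCast_rpow_two_thirds_le (L : ℕ) : (L : ℝ) ^ ((2 : ℝ) / 3) ≤ L := by
  rcases Nat.eq_zero_or_pos L with rfl | hL
  · simp
  · exact Real.rpow_le_self_of_one_le (by exact_mod_cast hL) (by norm_num)

lemma mul_le_gammaExp_self {m : ℝ} (hm : 0 ≤ m) (L N : ℕ) : m * L ≤ gammaExp m L N N := by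
  rw [gammaExp, Nat.sub_self, zero_add, pow_one]
  have : 0 ≤ (L : ℝ) ^ (-(1 : ℝ) / 4) := by positivity
  nlinarith [mul_nonneg hm (Nat.cast_nonneg (α := ℝ) L)]

lemma norm_le_of_nonSingular {ι : Type*} [Fintype ι] [DecidableEq ι] {N : ℕ}
    {W : (ι → ℤ) → ℝ} {Ψ : (ι → ℤ) → ℂ} {E m M : ℝ} {u x : ι → ℤ} {L : ℕ}
    (hNS : NonSingular N W E m u L) (heig : ∀ z, hamApply W Ψ z = E * Ψ z)
    (hM : ∀ y, ‖Ψ y‖ ≤ M) (hx : (supNorm (x - u) : ℝ) ≤ (L : ℝ) ^ ((2 : ℝ) / 3)) :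
    ‖Ψ x‖ ≤ (2 * L + 1) ^ Fintype.card ι * (3 ^ Fintype.card ι * M) *
      Real.exp (-gammaExp m L N N) := by
  obtain ⟨hE, hG⟩ := hNS
  have hxΛ : x ∈ cube u L :=
    mem_cube_iff.2 (by exact_mod_cast hx.trans (natCast_rpow_two_thirds_le L))
  have hterm : ∀ z : cube u L, ‖green W (cube u L) E x z * boundaryTerm Ψ (cube u L) z‖ ≤
      3 ^ Fintype.card ι * M * Real.exp (-gammaExp m L N N) := by
    intro z
    rw [norm_mul, mul_comm]
    by_cases hz : supNorm (z.1 - u) = L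
    · exact mul_le_mul (norm_boundaryTerm_le hM (cube u L) z) (hG x hx z hz) (norm_nonneg _)
        ((norm_nonneg _).trans (norm_boundaryTerm_le hM (cube u L) z))
    · rw [boundaryTerm_cube_eq_zero z.2 hz, norm_zero, zero_mul]
      have := (norm_nonneg _).trans (norm_boundaryTerm_le hM (cube u L) z)
      positivity
  calc ‖Ψ x‖ = ‖∑ z : cube u L, green W (cube u L) E x z * boundaryTerm Ψ (cube u L) z‖ := by
        rw [eq_neg_sum_green_mul_boundaryTerm hE (fun z _ => heig z) hxΛ, norm_neg]
    _ ≤ ∑ _z : cube u L, 3 ^ Fintype.card ι * M * Real.exp (-gammaExp m L N N) :=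
        (norm_sum_le _ _).trans (Finset.sum_le_sum fun z _ => hterm z)
    _ = _ := by
        rw [Finset.sum_const, Finset.card_univ, Fintype.card_coe, card_cube, nsmul_eq_mul]
        push_cast
        ring

lemma eventually_mul_pow_mul_exp_neg_lt_one {c : ℝ} (hc : 0 ≤ c) (K : ℕ) {m : ℝ} (hm : 0 < m) :
    ∀ᶠ L : ℕ in atTop, c * (2 * L + 1) ^ K * Real.exp (-(m * L)) < 1 := by
  have hlim : Tendsto (fun L : ℕ => c * 3 ^ K * ((L : ℝ) ^ (K : ℝ) * Real.exp (-m * L)))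
      atTop (𝓝 0) := by
    simpa using ((tendsto_rpow_mul_exp_neg_mul_atTop_nhds_zero K m hm).comp
      tendsto_natCast_atTop_atTop).const_mul (c * 3 ^ K)
  filter_upwards [hlim.eventually (gt_mem_nhds one_pos), eventually_ge_atTop 1] with L hlt hL
  have hL' : (1 : ℝ) ≤ L := by exact_mod_cast hL
  have hpoly : (2 * (L : ℝ) + 1) ^ K ≤ 3 ^ K * (L : ℝ) ^ (K : ℝ) := by
    rw [Real.rpow_natCast, ← mul_pow]
    exact pow_le_pow_left₀ (by positivity) (by linarith) K
  calc c * (2 * L + 1) ^ K * Real.exp (-(m * L))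
      ≤ c * (3 ^ K * (L : ℝ) ^ (K : ℝ)) * Real.exp (-m * L) := by
        rw [neg_mul]
        gcongr
    _ = c * 3 ^ K * ((L : ℝ) ^ (K : ℝ) * Real.exp (-m * L)) := by ring
    _ < 1 := hlt

theorem localization_center_singular_general (N d : ℕ)
    (m : ℝ) (hm : 0 < m) :
    ∃ Lstar : ℕ, ∀ L : ℕ, Lstar ≤ L →
      ∀ (W : Conf N d → ℝ) (Ψ : Conf N d → ℂ) (E : ℝ) (xstar x : Conf N d),
        Memℓp Ψ 2 → Ψ ≠ 0 →
        (∀ z : Conf N d, hamApply W Ψ z = (E : ℂ) * Ψ z) →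
        (∀ y : Conf N d, ‖Ψ y‖ ≤ ‖Ψ xstar‖) →
        (supNorm (xstar - x) : ℝ) ≤ (L : ℝ) ^ ((2 : ℝ) / 3) →
        ¬ NonSingular N W E m x L := by
  set K := Fintype.card (Fin N × Fin d)
  obtain ⟨Lstar, hLstar⟩ := eventually_atTop.1
    (eventually_mul_pow_mul_exp_neg_lt_one (c := 3 ^ K) (by positivity) K hm)
  refine ⟨Lstar, fun L hL W Ψ E xstar x _ hΨ heig hmax hxstar hNS => ?_⟩
  have hM : 0 < ‖Ψ xstar‖ := by
    obtain ⟨z, hz⟩ := Function.ne_iff.1 hΨ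
    exact (norm_pos_iff.2 hz).trans_le (hmax z)
  have hle := norm_le_of_nonSingular hNS heig hmax hxstar
  have hexp : Real.exp (-gammaExp m L N N) ≤ Real.exp (-(m * L)) :=
    Real.exp_le_exp.2 (neg_le_neg (mul_le_gammaExp_self hm.le L N))
  have hsmall := hLstar L hL
  have : ‖Ψ xstar‖ < ‖Ψ xstar‖ := calc
    ‖Ψ xstar‖ ≤ (2 * L + 1) ^ K * (3 ^ K * ‖Ψ xstar‖) * Real.exp (-(m * L)) :=
        hle.trans (by gcongr)
    _ = 3 ^ K * (2 * L + 1) ^ K * Real.exp (-(m * L)) * ‖Ψ xstar‖ := by ring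
    _ < 1 * ‖Ψ xstar‖ := by gcongr
    _ = ‖Ψ xstar‖ := one_mul _
  exact lt_irrefl _ this

/-- **Localization centers lie at centers of singular cubes** (Prop. 4.2). There is
`L* = L*(N,d,m)` such that for `L ≥ L*`: if `Ψ ∈ ℓ²` is a nonzero eigenfunction of `H`
with eigenvalue `E` and a maximizer `x*` of `|Ψ|` satisfies `‖x* - x‖ ≤ L^{1/α}`
(`α = 3/2`), then the cube `C_L(x)` is `(E,m)`-singular. -/
theorem localization_center_singular (N d : ℕ) (hN : 1 ≤ N) (hd : 1 ≤ d)
    (m : ℝ) (hm : 0 < m) :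
    ∃ Lstar : ℕ, ∀ L : ℕ, Lstar ≤ L →
      ∀ (W : Conf N d → ℝ) (Ψ : Conf N d → ℂ) (E : ℝ) (xstar x : Conf N d),
        Memℓp Ψ 2 → Ψ ≠ 0 →
        (∀ z : Conf N d, hamApply W Ψ z = (E : ℂ) * Ψ z) →
        (∀ y : Conf N d, ‖Ψ y‖ ≤ ‖Ψ xstar‖) →
        (supNorm (xstar - x) : ℝ) ≤ (L : ℝ) ^ ((2 : ℝ) / 3) →
        ¬ NonSingular N W E m x L :=
  localization_center_singular_general N d m hm

end MPLoc
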